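/- Let α ∈ ℂ and let j, k ≥ 1 be integers such that j + k is odd. Then B_j·A_k + B_k·A_j = 0, where the products are matrix products of 2×2 complex matrices. -/
import Mathlib


/-- The matrix `A_k` from the jump coefficients. -/
noncomputable def Amat (α : ℂ) (k : ℕ) : Matrix (Fin 2) (Fin 2) ℂ :=
  !![(-1) ^ k * (α ^ 2 + (k : ℂ) / 2 - 1 / 4) / (k : ℂ), -Complex.I * ((k : ℂ) - 1 / 2);
     (-1) ^ k * ((k : ℂ) - 1 / 2) * Complex.I, (α ^ 2 + (k : ℂ) / 2 - 1 / 4) / (k : ℂ)]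

/-- `B_k = A_k` for odd `k`, and `B_k = A_k - ((4α²+2k-1)/(2k)) I` for even `k`. -/
noncomputable def Bmat (α : ℂ) (k : ℕ) : Matrix (Fin 2) (Fin 2) ℂ :=
  if Odd k then Amat α k
  else Amat α k - ((4 * α ^ 2 + 2 * (k : ℂ) - 1) / (2 * (k : ℂ))) • (1 : Matrix (Fin 2) (Fin 2) ℂ)

lemma aux_anticomm (a b c d : ℂ) :
    !![-a, -Complex.I * b; -Complex.I * b, a] * !![c, -Complex.I * d; Complex.I * d, c] +
      !![-c, -Complex.I * d; Complex.I * d, -c] * !![-a, -Complex.I * b; -Complex.I * b, a] = 0 := by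
  ext i l
  fin_cases i <;> fin_cases l <;>
    simp [Matrix.mul_apply, Fin.sum_univ_succ] <;> ring_nf <;>
    simp [Complex.I_sq] <;> ring

lemma Amat_odd (α : ℂ) (j : ℕ) (hj : Odd j) :
    Amat α j = !![-((α ^ 2 + (j : ℂ) / 2 - 1 / 4) / (j : ℂ)), -Complex.I * ((j : ℂ) - 1 / 2);
      -Complex.I * ((j : ℂ) - 1 / 2), (α ^ 2 + (j : ℂ) / 2 - 1 / 4) / (j : ℂ)] := by
  have hj' : ((-1 : ℂ)) ^ j = -1 := hj.neg_one_pow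
  ext i l
  fin_cases i <;> fin_cases l <;> simp [Amat, hj'] <;> ring

lemma Amat_even (α : ℂ) (k : ℕ) (hk : Even k) :
    Amat α k = !![(α ^ 2 + (k : ℂ) / 2 - 1 / 4) / (k : ℂ), -Complex.I * ((k : ℂ) - 1 / 2);
      Complex.I * ((k : ℂ) - 1 / 2), (α ^ 2 + (k : ℂ) / 2 - 1 / 4) / (k : ℂ)] := by
  have hk' : ((-1 : ℂ)) ^ k = 1 := hk.neg_one_pow
  ext i l
  fin_cases i <;> fin_cases l <;> simp [Amat, hk'] <;> ring

lemma Bmat_even (α : ℂ) (k : ℕ) (hk : Even k) (hk0 : k ≠ 0) :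
    Bmat α k = !![-((α ^ 2 + (k : ℂ) / 2 - 1 / 4) / (k : ℂ)), -Complex.I * ((k : ℂ) - 1 / 2);
      Complex.I * ((k : ℂ) - 1 / 2), -((α ^ 2 + (k : ℂ) / 2 - 1 / 4) / (k : ℂ))] := by
  have hk' : ((-1 : ℂ)) ^ k = 1 := hk.neg_one_pow
  have hknotodd : ¬ Odd k := by simpa using hk
  have hkc : (k : ℂ) ≠ 0 := Nat.cast_ne_zero.2 hk0
  ext i l
  fin_cases i <;> fin_cases l <;>
    simp [Bmat, Amat, hknotodd, hk', Matrix.one_apply] <;> field_simp <;> ring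

lemma key_anticomm (α : ℂ) (j k : ℕ) (hj : Odd j) (hk : Even k) (hk0 : k ≠ 0) :
    Bmat α j * Amat α k + Bmat α k * Amat α j = 0 := by
  rw [Bmat, if_pos hj, Amat_odd α j hj, Amat_even α k hk, Bmat_even α k hk hk0]
  exact aux_anticomm _ _ _ _

/-- if `j + k` is odd then `B_j A_k + B_k A_j = 0`. -/
theorem Bmat_Amat_anticommute_odd (α : ℂ) (j k : ℕ) (hj : 1 ≤ j) (hk : 1 ≤ k)
    (h : Odd (j + k)) :
    Bmat α j * Amat α k + Bmat α k * Amat α j = 0 := by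
  have hiff := Nat.odd_add.mp h
  by_cases hoj : Odd j
  · exact key_anticomm α j k hoj (hiff.mp hoj) (by omega)
  · have hok : Odd k := by
      rcases Nat.even_or_odd k with he | ho
      · exact absurd (hiff.mpr he) hoj
      · exact ho
    have hej : Even j := Nat.not_odd_iff_even.mp hoj
    rw [add_comm]
    exact key_anticomm α k j hok hej (by omega)
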